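/- Let ρ be the standard Gaussian density on ℝ^d, U orthogonal, r ≤ d, and T(z) = U_r τ(z) + U_⊥ z_⊥ a lazy map with τ a diffeomorphism of ℝ^r. Then there exists a strictly positive function f : ℝ^r → ℝ_{>0} such that the pushforward density satisfies T_♯ρ(x) = f(U_rᵀ x) ρ(x) for all x ∈ ℝ^d. -/

import Mathlib

open MeasureTheory Matrix Filter
open scoped ENNReal

/-- Standard Gaussian density on `ℝ^d`. -/
noncomputable def gaussD (d : ℕ) (x : Fin d → ℝ) : ℝ :=
  (2 * Real.pi) ^ (-(d : ℝ) / 2) * Real.exp (-(∑ i, (x i) ^ 2) / 2)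

/-- Standard Gaussian measure on `ℝ^d`. -/
noncomputable def stdGauss (d : ℕ) : Measure (Fin d → ℝ) :=
  volume.withDensity (fun x => ENNReal.ofReal (gaussD d x))

open Classical in
/-- Kullback--Leibler divergence, valued in `ℝ≥0∞`. -/
noncomputable def klDiv {E : Type*} [MeasurableSpace E] (μ ν : Measure E) : ℝ≥0∞ :=
  if μ ≪ ν ∧ Integrable (fun x => Real.log ((μ.rnDeriv ν x).toReal)) μ
  then ENNReal.ofReal (∫ x, Real.log ((μ.rnDeriv ν x).toReal) ∂μ)
  else ⊤

/-- First `r` columns of a `d×d` matrix. -/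
def colsFirst {d : ℕ} (r : ℕ) (hr : r ≤ d) (U : Matrix (Fin d) (Fin d) ℝ) :
    Matrix (Fin d) (Fin r) ℝ :=
  fun i j => U i (Fin.castLE hr j)

/-- Last `d - r` columns of a `d×d` matrix. -/
def colsLast {d : ℕ} (r : ℕ) (hr : r ≤ d) (U : Matrix (Fin d) (Fin d) ℝ) :
    Matrix (Fin d) (Fin (d - r)) ℝ :=
  fun i j => U i ⟨r + (j : ℕ), by have := j.isLt; omega⟩

/-- A pair of maps forming a (C¹) diffeomorphism of `ℝ^n`. -/
def IsDiffeo {n : ℕ} (τ σ : (Fin n → ℝ) → (Fin n → ℝ)) : Prop :=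
  ContDiff ℝ 1 τ ∧ ContDiff ℝ 1 σ ∧ Function.LeftInverse σ τ ∧ Function.RightInverse σ τ

/-- The lazy map `T(z) = U_r τ(z_{1:r}) + U_⊥ z_⊥`. -/
noncomputable def lazyMap {d r : ℕ} (hr : r ≤ d) (U : Matrix (Fin d) (Fin d) ℝ)
    (τ : (Fin r → ℝ) → (Fin r → ℝ)) (z : Fin d → ℝ) : Fin d → ℝ :=
  (colsFirst r hr U).mulVec (τ (fun j => z (Fin.castLE hr j))) +
  (colsLast r hr U).mulVec (fun j => z ⟨r + (j : ℕ), by have := j.isLt; omega⟩)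

/-- Membership in the class `𝒯_r(U)` of lazy maps. -/
def IsLazy {d : ℕ} (r : ℕ) (hr : r ≤ d) (U : Matrix (Fin d) (Fin d) ℝ)
    (T : (Fin d → ℝ) → (Fin d → ℝ)) : Prop :=
  ∃ τ σ, IsDiffeo τ σ ∧ T = lazyMap hr U τ


/-! The inverse of `T = U ∘ (τ × id)`, in the coordinates `(z_{1:r}, z_⊥)` of `ℝ^d`, is
`S = (σ × id) ∘ Uᵀ`, so by the change-of-variables formula `T_♯ρ(x) = |det ∇S(x)| ρ(S x)`.
As `U` is orthogonal, `|det ∇S(x)| = |det ∇σ(y)|` for `y = U_rᵀ x`, and since `S` does not touch the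
`U_⊥`-component of `x`, `‖S x‖² - ‖x‖² = ‖σ y‖² - ‖y‖²`. Hence `T_♯ρ(x) = f(y) ρ(x)` with
`f(y) = |det ∇σ(y)| exp ((‖y‖² - ‖σ y‖²) / 2)`, which is positive because `τ ∘ σ = id` makes
`∇σ(y)` invertible. -/

theorem map_withDensity_eq_of_hasFDerivAt_inverse {E : Type*} [NormedAddCommGroup E]
    [NormedSpace ℝ E] [FiniteDimensional ℝ E] [MeasurableSpace E] [BorelSpace E]
    (μ : Measure E) [μ.IsAddHaarMeasure] {T S : E → E} {S' : E → E →L[ℝ] E}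
    (hST : Function.LeftInverse S T) (hTS : Function.RightInverse S T)
    (hS : ∀ x, HasFDerivAt S (S' x) x) (g : E → ℝ≥0∞) :
    (μ.withDensity g).map T = μ.withDensity fun x => ENNReal.ofReal |(S' x).det| * g (S x) := by
  have hpre (A : Set E) : T ⁻¹' A = S '' A := by rw [Set.image_eq_preimage_of_inverse hTS hST]
  have hT : Measurable T := fun A hA => by
    rw [hpre]
    exact hA.image_of_continuousOn_injOn
      (continuous_iff_continuousAt.2 fun x => (hS x).continuousAt).continuousOn hTS.injective.injOn
  ext A hA
  rw [Measure.map_apply hT hA, withDensity_apply _ (hT hA), withDensity_apply _ hA, hpre,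
    lintegral_image_eq_lintegral_abs_det_fderiv_mul μ hA (fun x _ => (hS x).hasFDerivWithinAt)
      hTS.injective.injOn]

theorem HasFDerivAt.det_ne_zero_of_leftInverse {𝕜 E : Type*} [NontriviallyNormedField 𝕜]
    [NormedAddCommGroup E] [NormedSpace 𝕜 E] {σ τ : E → E} {σ' : E →L[𝕜] E} {y : E}
    (hσ : HasFDerivAt σ σ' y) (hτσ : Function.LeftInverse τ σ)
    (hτ : DifferentiableAt 𝕜 τ (σ y)) : σ'.det ≠ 0 := by
  have hcomp : (fderiv 𝕜 τ (σ y)).comp σ' = .id 𝕜 E := by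
    refine (hτ.hasFDerivAt.comp y hσ).unique ?_
    rw [hτσ.comp_eq_id]
    exact hasFDerivAt_id y
  have hdet : LinearMap.det ((fderiv 𝕜 τ (σ y) : E →ₗ[𝕜] E) ∘ₗ (σ' : E →ₗ[𝕜] E)) = 1 := by
    rw [← ContinuousLinearMap.toLinearMap_comp, hcomp, ContinuousLinearMap.coe_id,
      LinearMap.det_id]
  rw [LinearMap.det_comp] at hdet
  exact right_ne_zero_of_mul_eq_one hdet

section MapFst

variable {𝕜 E F G : Type*} [NontriviallyNormedField 𝕜]
  [NormedAddCommGroup E] [NormedSpace 𝕜 E] [NormedAddCommGroup F] [NormedSpace 𝕜 F]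
  [NormedAddCommGroup G] [NormedSpace 𝕜 G]

def mapFst (e : E ≃L[𝕜] F × G) (φ : F → F) (x : E) : E :=
  e.symm (Prod.map φ id (e x))

theorem Function.LeftInverse.mapFst {φ ψ : F → F} (h : Function.LeftInverse ψ φ)
    (e : E ≃L[𝕜] F × G) : Function.LeftInverse (mapFst e ψ) (mapFst e φ) := fun x => by
  simp [_root_.mapFst, Prod.map_map, h.comp_eq_id]

theorem hasFDerivAt_mapFst (e : E ≃L[𝕜] F × G) {φ : F → F} {φ' : F →L[𝕜] F} {x : E}
    (hφ : HasFDerivAt φ φ' (e x).1) :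
    HasFDerivAt (mapFst e φ)
      ((e.symm : F × G →L[𝕜] E) ∘L (φ'.prodMap (.id 𝕜 G)) ∘L (e : E →L[𝕜] F × G)) x :=
  e.symm.hasFDerivAt.comp x ((hφ.prodMap _ (hasFDerivAt_id _)).comp x e.hasFDerivAt)

theorem det_conj_prodMap_id [FiniteDimensional 𝕜 F] [FiniteDimensional 𝕜 G]
    (e : E ≃L[𝕜] F × G) (A : F →L[𝕜] F) :
    ((e.symm : F × G →L[𝕜] E) ∘L (A.prodMap (.id 𝕜 G)) ∘L (e : E →L[𝕜] F × G)).det = A.det := by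
  have := LinearMap.det_conj ((A : F →ₗ[𝕜] F).prodMap LinearMap.id) e.toLinearEquiv.symm
  simpa [ContinuousLinearMap.det, LinearMap.det_prodMap] using this

end MapFst

section SplitCoords

variable {d r : ℕ}

def finSplit (hr : r ≤ d) : Fin r ⊕ Fin (d - r) ≃ Fin d :=
  finSumFinEquiv.trans (finCongr (Nat.add_sub_cancel' hr))

theorem sum_finSplit {M : Type*} [AddCommMonoid M] (hr : r ≤ d) (g : Fin d → M) :
    ∑ i, g i = ∑ j : Fin r, g (Fin.castLE hr j) +
      ∑ j : Fin (d - r), g ⟨r + (j : ℕ), by have := j.isLt; omega⟩ := by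
  rw [← Equiv.sum_comp (finSplit hr), Fintype.sum_sum_type]
  rfl

/-- The coordinates `(z_{1:r}, z_⊥)` of `z ∈ ℝ^d`. -/
noncomputable def splitCoords (hr : r ≤ d) :
    (Fin d → ℝ) ≃L[ℝ] (Fin r → ℝ) × (Fin (d - r) → ℝ) :=
  ((LinearEquiv.funCongrLeft ℝ ℝ (finSplit hr)).trans
    (LinearEquiv.sumArrowLequivProdArrow _ _ ℝ ℝ)).toContinuousLinearEquiv

theorem sum_sq_eq_sum_sq_splitCoords (hr : r ≤ d) (z : Fin d → ℝ) :
    ∑ i, z i ^ 2 = ∑ j, (splitCoords hr z).1 j ^ 2 + ∑ j, (splitCoords hr z).2 j ^ 2 :=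
  sum_finSplit hr _

theorem mulVec_eq_colsFirst_add_colsLast (hr : r ≤ d) (U : Matrix (Fin d) (Fin d) ℝ)
    (z : Fin d → ℝ) :
    U *ᵥ z = colsFirst r hr U *ᵥ (splitCoords hr z).1 + colsLast r hr U *ᵥ (splitCoords hr z).2 :=
  funext fun _ => sum_finSplit hr _

theorem colsFirst_transpose_mulVec (hr : r ≤ d) (U : Matrix (Fin d) (Fin d) ℝ)
    (x : Fin d → ℝ) : (colsFirst r hr U)ᵀ *ᵥ x = (splitCoords hr (Uᵀ *ᵥ x)).1 :=
  rfl

theorem gaussD_mapFst (hr : r ≤ d) (φ : (Fin r → ℝ) → (Fin r → ℝ)) (z : Fin d → ℝ) :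
    gaussD d (mapFst (splitCoords hr) φ z) =
      Real.exp ((∑ j, (splitCoords hr z).1 j ^ 2 - ∑ j, φ (splitCoords hr z).1 j ^ 2) / 2) *
        gaussD d z := by
  have hexp (v w : Fin d → ℝ) :
      gaussD d v = Real.exp ((∑ i, w i ^ 2 - ∑ i, v i ^ 2) / 2) * gaussD d w := by
    rw [gaussD, gaussD, mul_left_comm, ← Real.exp_add]
    ring_nf
  rw [hexp _ z, sum_sq_eq_sum_sq_splitCoords hr z,
    sum_sq_eq_sum_sq_splitCoords hr (mapFst _ φ z), mapFst,
    ContinuousLinearEquiv.apply_symm_apply, Prod.map_fst, Prod.map_snd, id_eq]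
  congr 2
  ring

end SplitCoords

section Orthogonal

variable {d : ℕ} {U : Matrix (Fin d) (Fin d) ℝ}

theorem gaussD_transpose_mulVec (hU : U * Uᵀ = 1) (x : Fin d → ℝ) :
    gaussD d (Uᵀ *ᵥ x) = gaussD d x := by
  have h (v : Fin d → ℝ) : ∑ i, v i ^ 2 = v ⬝ᵥ v := by simp only [dotProduct, sq]
  rw [gaussD, gaussD, h, h, dotProduct_mulVec, vecMul_transpose, mulVec_mulVec, hU, one_mulVec]

theorem abs_det_eq_one_of_mul_transpose_eq_one (hU : U * Uᵀ = 1) : |U.det| = 1 := by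
  have h := congrArg det hU
  rw [det_mul, det_one, det_transpose, ← sq] at h
  exact (sq_eq_sq₀ (abs_nonneg _) zero_le_one).1 (by rw [sq_abs, h, one_pow])

end Orthogonal

section LazyMap

variable {d r : ℕ} (hr : r ≤ d)

theorem lazyMap_eq_mulVec_mapFst (U : Matrix (Fin d) (Fin d) ℝ) (τ : (Fin r → ℝ) → (Fin r → ℝ))
    (z : Fin d → ℝ) : lazyMap hr U τ z = U *ᵥ mapFst (splitCoords hr) τ z := by
  rw [mulVec_eq_colsFirst_add_colsLast hr, mapFst, ContinuousLinearEquiv.apply_symm_apply]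
  rfl

noncomputable def lazyMapInv (U : Matrix (Fin d) (Fin d) ℝ) (σ : (Fin r → ℝ) → (Fin r → ℝ))
    (x : Fin d → ℝ) : Fin d → ℝ :=
  mapFst (splitCoords hr) σ (Uᵀ *ᵥ x)

variable {U : Matrix (Fin d) (Fin d) ℝ} {τ σ : (Fin r → ℝ) → (Fin r → ℝ)}

theorem lazyMapInv_leftInverse (hU : U * Uᵀ = 1) (h : Function.LeftInverse σ τ) :
    Function.LeftInverse (lazyMapInv hr U σ) (lazyMap hr U τ) := fun z => by
  rw [lazyMapInv, lazyMap_eq_mulVec_mapFst, mulVec_mulVec, mul_eq_one_comm.mp hU, one_mulVec,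
    h.mapFst _ z]

theorem lazyMapInv_rightInverse (hU : U * Uᵀ = 1) (h : Function.RightInverse σ τ) :
    Function.RightInverse (lazyMapInv hr U σ) (lazyMap hr U τ) := fun x => by
  rw [lazyMapInv, lazyMap_eq_mulVec_mapFst, h.mapFst, mulVec_mulVec, hU, one_mulVec]

theorem exists_hasFDerivAt_lazyMapInv (hU : U * Uᵀ = 1) {x : Fin d → ℝ}
    {σ' : (Fin r → ℝ) →L[ℝ] (Fin r → ℝ)} (hσ : HasFDerivAt σ σ' ((colsFirst r hr U)ᵀ *ᵥ x)) :
    ∃ S', HasFDerivAt (lazyMapInv hr U σ) S' x ∧ |S'.det| = |σ'.det| := by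
  let Ut : (Fin d → ℝ) →L[ℝ] (Fin d → ℝ) := (toLin' Uᵀ).toContinuousLinearMap
  refine ⟨_, (hasFDerivAt_mapFst (splitCoords hr) hσ).comp x Ut.hasFDerivAt, ?_⟩
  rw [ContinuousLinearMap.det, ContinuousLinearMap.toLinearMap_comp, LinearMap.det_comp,
    ← ContinuousLinearMap.det, det_conj_prodMap_id, LinearMap.coe_toContinuousLinearMap,
    LinearMap.det_toLin', abs_mul, det_transpose, abs_det_eq_one_of_mul_transpose_eq_one hU,
    mul_one]

theorem gaussD_lazyMapInv (hU : U * Uᵀ = 1) (x : Fin d → ℝ) :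
    gaussD d (lazyMapInv hr U σ x) =
      Real.exp ((∑ j, ((colsFirst r hr U)ᵀ *ᵥ x) j ^ 2 -
        ∑ j, σ ((colsFirst r hr U)ᵀ *ᵥ x) j ^ 2) / 2) * gaussD d x := by
  rw [lazyMapInv, gaussD_mapFst, gaussD_transpose_mulVec hU, colsFirst_transpose_mulVec]

end LazyMap

/-- the pushforward of the standard Gaussian under a lazy map has density
`f(U_rᵀ x) ρ(x)` for some strictly positive `f : ℝ^r → ℝ`. -/
theorem lazyMap_pushforward_density {d r : ℕ} (hr : r ≤ d)
    (U : Matrix (Fin d) (Fin d) ℝ) (hU : U * Uᵀ = 1)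
    (τ σ : (Fin r → ℝ) → (Fin r → ℝ)) (hτ : IsDiffeo τ σ) :
    ∃ f : (Fin r → ℝ) → ℝ, (∀ y, 0 < f y) ∧
      Measure.map (lazyMap hr U τ) (stdGauss d) =
        volume.withDensity
          (fun x => ENNReal.ofReal (f ((colsFirst r hr U)ᵀ.mulVec x) * gaussD d x)) := by
  obtain ⟨hτ, hσ, hστ, hτσ⟩ := hτ
  have hσ' (y : Fin r → ℝ) : HasFDerivAt σ (fderiv ℝ σ y) y :=
    (hσ.differentiable one_ne_zero y).hasFDerivAt
  choose S' hS hdetS using fun x =>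
    exists_hasFDerivAt_lazyMapInv hr hU (hσ' ((colsFirst r hr U)ᵀ *ᵥ x))
  refine ⟨fun y => |(fderiv ℝ σ y).det| * Real.exp ((∑ j, y j ^ 2 - ∑ j, σ y j ^ 2) / 2),
    fun y => mul_pos (abs_pos.2 ?_) (Real.exp_pos _), ?_⟩
  · exact (hσ' y).det_ne_zero_of_leftInverse hτσ (hτ.differentiable one_ne_zero _)
  rw [stdGauss, map_withDensity_eq_of_hasFDerivAt_inverse volume
    (lazyMapInv_leftInverse hr hU hστ) (lazyMapInv_rightInverse hr hU hτσ) hS]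
  congr with x
  rw [← ENNReal.ofReal_mul (abs_nonneg _), hdetS, gaussD_lazyMapInv hr hU, mul_assoc]
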